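/- Let Π be a ground logic program over atoms A with rules indexed by a finite type R, and let T(Π) be its transformed program over A ⊎ R. If M' ⊆ A ⊎ R is a stable model of T(Π), then M = M' ∩ A is a model of Π, i.e. M satisfies every rule of Π. -/

import Mathlib

/-- A ground rule: head ← body⁺, not body⁻. -/
structure Rule (A : Type*) where
  head : A
  bodyPos : Finset A
  bodyNeg : Finset A
deriving DecidableEq

/-- The body of rule `r` is true in interpretation `M`:
`body⁺(r) ⊆ M` and `body⁻(r) ∩ M = ∅`. -/
def BodyTrue {A : Type*} (M : Set A) (r : Rule A) : Prop :=
  ↑r.bodyPos ⊆ M ∧ ∀ a ∈ r.bodyNeg, a ∉ M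

/-- `M` is a model of the program `P` (a family of rules indexed by `R`). -/
def IsModel {A R : Type*} (P : R → Rule A) (M : Set A) : Prop :=
  ∀ r, BodyTrue M (P r) → (P r).head ∈ M

/-- `M` is a supported model of `P`: a model in which every true atom
is the head of some rule of `P` whose body is true in `M`. -/
def IsSupported {A R : Type*} (P : R → Rule A) (M : Set A) : Prop :=
  IsModel P M ∧ ∀ a ∈ M, ∃ r, (P r).head = a ∧ ↑(P r).bodyPos ⊆ M ∧
    ∀ b ∈ (P r).bodyNeg, b ∉ M

/-- `N` is a model of the Gelfond–Lifschitz reduct `P^M`: for every rule of `P`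
surviving the reduct (i.e. with `body⁻(r) ∩ M = ∅`), whose negative literals are
removed, if its positive body holds in `N` then so does its head. -/
def ReductModel {A R : Type*} (P : R → Rule A) (M N : Set A) : Prop :=
  ∀ r, (∀ a ∈ (P r).bodyNeg, a ∉ M) → ↑(P r).bodyPos ⊆ N → (P r).head ∈ N

/-- `M` is a stable model of `P`: `M` is the least model of the reduct `P^M`. -/
def IsStable {A R : Type*} (P : R → Rule A) (M : Set A) : Prop :=
  ReductModel P M M ∧ ∀ N, ReductModel P M N → M ⊆ N

/-- Index type for the rules of the transformed program `T(P)`: one rule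
`head(r) ← not dm_r` per rule `r`, one rule `dm_r ← not l` per `l ∈ body⁺(r)`,
and one rule `dm_r ← l` per `l ∈ body⁻(r)`. -/
abbrev TransIdx {A R : Type*} (P : R → Rule A) : Type _ :=
  R ⊕ ((Σ r : R, {l // l ∈ (P r).bodyPos}) ⊕ (Σ r : R, {l // l ∈ (P r).bodyNeg}))

/-- The transformed program `T(P)` over atoms `A ⊕ R`, where `Sum.inr r`
plays the role of the fresh auxiliary atom `dm_r`. -/
def Transform {A R : Type*} (P : R → Rule A) : TransIdx P → Rule (A ⊕ R)
  | Sum.inl r => ⟨Sum.inl (P r).head, ∅, {Sum.inr r}⟩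
  | Sum.inr (Sum.inl ⟨r, l⟩) => ⟨Sum.inr r, ∅, {Sum.inl l.1}⟩
  | Sum.inr (Sum.inr ⟨r, l⟩) => ⟨Sum.inr r, {Sum.inl l.1}, ∅⟩

/-- `Lift P M = M ∪ { dm_r | the body of rule r is false in M }`,
viewing `M ⊆ A` as a subset of `A ⊕ R` via the left injection. -/
def Lift {A R : Type*} (P : R → Rule A) (M : Set A) : Set (A ⊕ R) :=
  Sum.inl '' M ∪ Sum.inr '' {r | ¬ BodyTrue M (P r)}

/-- If an atom `a ∈ M` had no supporting rule, `M \ {a}` would still be a model of the reduct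
`P^M`, contradicting the minimality of `M`. -/
theorem IsStable.isSupported {A R : Type*} {P : R → Rule A} {M : Set A} (h : IsStable P M) :
    IsSupported P M := by
  obtain ⟨hred, hmin⟩ := h
  refine ⟨fun r hbody => hred r hbody.2 hbody.1, fun a ha => ?_⟩
  by_contra! hunsupp
  have hdiff : ReductModel P M (M \ {a}) := by
    intro r hneg hpos
    have hhead : (P r).head ∈ M := hred r hneg (hpos.trans Set.sdiff_subset)
    refine ⟨hhead, fun hra => ?_⟩
    obtain ⟨b, hb, hbM⟩ := hunsupp r hra (hpos.trans Set.sdiff_subset)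
    exact hneg b hb hbM
  exact (hmin _ hdiff ha).2 rfl

theorem bodyTrue_transform_inl {A R : Type*} {P : R → Rule A} {M' : Set (A ⊕ R)} {r : R} :
    BodyTrue M' (Transform P (Sum.inl r)) ↔ Sum.inr r ∉ M' := by
  simp [BodyTrue, Transform]

/-- The only rules of `T(P)` with head `dm_r` encode the failure of one literal of the body
of `r`, so a supported `dm_r` falsifies that body. -/
theorem not_bodyTrue_of_inr_mem {A R : Type*} {P : R → Rule A} {M' : Set (A ⊕ R)}
    (hsupp : IsSupported (Transform P) M') {r : R} (hr : Sum.inr r ∈ M') :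
    ¬ BodyTrue (Sum.inl ⁻¹' M') (P r) := by
  rintro ⟨hpos, hneg⟩
  obtain ⟨i, hhead, hiPos, hiNeg⟩ := hsupp.2 _ hr
  rcases i with r' | ⟨r', l, hl⟩ | ⟨r', l, hl⟩
  · simp [Transform] at hhead
  · obtain rfl : r' = r := by simpa [Transform] using hhead
    exact hiNeg (Sum.inl l) (by simp [Transform]) (hpos hl)
  · obtain rfl : r' = r := by simpa [Transform] using hhead
    exact hneg l hl (hiPos (by simp [Transform]))

theorem stable_model_of_transform_gives_model_general
    {A R : Type*} (P : R → Rule A) (M' : Set (A ⊕ R))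
    (h : IsStable (Transform P) M') : IsModel P (Sum.inl ⁻¹' M') := by
  intro r hbody
  have hsupp := h.isSupported
  exact hsupp.1 (Sum.inl r)
    (bodyTrue_transform_inl.2 fun hdm => not_bodyTrue_of_inr_mem hsupp hdm hbody)

/-- If `M'` is a stable model of `T(P)`, then `M = M' ∩ A` is a model of `P`. -/
theorem stable_model_of_transform_gives_model
    {A R : Type*} [Fintype R] (P : R → Rule A) (M' : Set (A ⊕ R))
    (h : IsStable (Transform P) M') : IsModel P (Sum.inl ⁻¹' M') :=
  stable_model_of_transform_gives_model_general P M' h
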